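/- Let G be an X-generated group. The map F(G) → P(G) defined by (Γ,g) ↦ (Ed(Γ), g) is a surjective canonical morphism of X-generated F-inverse monoids (preserving ·, ⁻¹, m and 1 and sending (Γ_x, x_G) to (Γ_x, x_G)) whose kernel congruence is the smallest congruence on F(G) with perfect quotient; in particular P(G) ≅ F(G)/θ(PF). Consequently, P(G) is universal for perfect X-generated F-inverse monoids: for every perfect X-generated F-inverse monoid F for which there is a canonical morphism ν : G → F/σ, there exists a canonical morphism φ : P(G) → F of F-inverse monoids such that for every (Γ,g) ∈ P(G), the σ-class of φ(Γ,g) in F/σ equals ν(g). -/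

import Mathlib

/-!
`Ed` forgets isolated vertices and commutes with unions and translations, so it is a morphism
`F(G) → P(G)`. Since `m(b)·m(b⁻¹) = (Δ_g, 1)` with `g = b.elt`, right multiplication by it only
adds an isolated vertex; a perfect congruence identifies `m(b)·m(b⁻¹)` with `1`, hence
identifies elements that differ by isolated vertices only, which is the kernel of `Ed`.

For universality: in a perfect F-inverse monoid `F` the maxima form a copy `μ : F/σ →* F` of the
group `F/σ` inside `F`, and `(Γ, g) ↦ (∏_{(h, x) ∈ Γ} μ(h)·x x⁻¹·μ(h)⁻¹)·μ(g)` (a product of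
commuting idempotents) respects all the operations of `P(G)`.
-/

namespace FInvPaper

universe u v w

section Generic
variable {S : Type u}

/-- The natural partial order on an inverse monoid: `a ≤ b` iff `a = b·e` for some idempotent. -/
def nle [Mul S] (a b : S) : Prop := ∃ e : S, e * e = e ∧ a = b * e

/-- The minimum group congruence σ: `a σ b` iff `a·e = b·e` for some idempotent `e`. -/
def sigma [Mul S] (a b : S) : Prop := ∃ e : S, e * e = e ∧ a * e = b * e

/-- `m` assigns to every element the maximum element of its σ-class. -/
def IsMaxOp [Mul S] (m : S → S) : Prop :=
  ∀ a : S, sigma (m a) a ∧ ∀ b : S, sigma b a → nle b (m a)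

/-- A subset of `S` which is an entire σ-class. -/
def IsSigmaClass [Mul S] (A : Set S) : Prop := ∃ a : S, A = {b : S | sigma b a}

end Generic

/-- Inverse monoids: monoids with an involution satisfying `a·a⁻¹·a = a`, `(a·b)⁻¹ = b⁻¹·a⁻¹`,
in which all idempotents commute. -/
class InverseMonoid (S : Type u) extends Monoid S, Inv S where
  inv_inv : ∀ a : S, a⁻¹⁻¹ = a
  mul_inv_rev : ∀ a b : S, (a * b)⁻¹ = b⁻¹ * a⁻¹
  mul_inv_self_mul : ∀ a : S, a * a⁻¹ * a = a
  idem_comm : ∀ e f : S, e * e = e → f * f = f → e * f = f * e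

/-- F-inverse monoids in the enriched signature `(·, ⁻¹, ᵐ, 1)`. -/
class FInverseMonoid (S : Type u) extends InverseMonoid S where
  mx : S → S
  mx_isMaxOp : IsMaxOp mx

/-- The max-operation of an F-inverse monoid. -/
def mx {S : Type u} [FInverseMonoid S] : S → S := FInverseMonoid.mx

section InverseMonoidLemmas

variable {S : Type u} [InverseMonoid S]

lemma mul_inv_idem (a : S) : (a * a⁻¹) * (a * a⁻¹) = a * a⁻¹ := by
  conv_lhs => rw [← mul_assoc, InverseMonoid.mul_inv_self_mul]

lemma inv_mul_self_mul (a : S) : a⁻¹ * a * a⁻¹ = a⁻¹ := by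
  have h := InverseMonoid.mul_inv_self_mul (a := a⁻¹)
  rwa [InverseMonoid.inv_inv] at h

lemma inv_mul_idem (a : S) : (a⁻¹ * a) * (a⁻¹ * a) = a⁻¹ * a := by
  conv_lhs => rw [← mul_assoc, inv_mul_self_mul]

lemma idem_inv {e : S} (he : e * e = e) : e⁻¹ = e := by
  have h1 : e⁻¹ * e⁻¹ = e⁻¹ := by rw [← InverseMonoid.mul_inv_rev, he]
  have hc : e * e⁻¹ = e⁻¹ * e := InverseMonoid.idem_comm e e⁻¹ he h1
  have h2 : e = e * e⁻¹ := by
    calc e = e * e⁻¹ * e := (InverseMonoid.mul_inv_self_mul e).symm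
    _ = e * (e⁻¹ * e) := mul_assoc _ _ _
    _ = e * (e * e⁻¹) := by rw [hc]
    _ = e * e * e⁻¹ := (mul_assoc _ _ _).symm
    _ = e * e⁻¹ := by rw [he]
  have h3 : e⁻¹ = e⁻¹ * e := by
    calc e⁻¹ = e⁻¹ * e * e⁻¹ := (inv_mul_self_mul e).symm
    _ = e⁻¹ * (e * e⁻¹) := mul_assoc _ _ _
    _ = e⁻¹ * (e⁻¹ * e) := by rw [hc]
    _ = e⁻¹ * e⁻¹ * e := (mul_assoc _ _ _).symm
    _ = e⁻¹ * e := by rw [h1]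
  rw [h3, ← hc, ← h2]

lemma idem_mul_idem {e f : S} (he : e * e = e) (hf : f * f = f) :
    (e * f) * (e * f) = e * f := by
  calc (e * f) * (e * f) = e * (f * (e * f)) := mul_assoc _ _ _
  _ = e * (f * e * f) := by rw [← mul_assoc f e f]
  _ = e * (e * f * f) := by rw [← InverseMonoid.idem_comm e f he hf]
  _ = e * (e * (f * f)) := by rw [mul_assoc e f f]
  _ = e * (e * f) := by rw [hf]
  _ = e * e * f := (mul_assoc _ _ _).symm
  _ = e * f := by rw [he]

lemma sigma_refl (a : S) : sigma a a := ⟨1, one_mul 1, rfl⟩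

lemma sigma_symm {a b : S} (h : sigma a b) : sigma b a := by
  obtain ⟨e, he, hab⟩ := h
  exact ⟨e, he, hab.symm⟩

lemma sigma_trans {a b c : S} (h₁ : sigma a b) (h₂ : sigma b c) : sigma a c := by
  obtain ⟨e, he, h1⟩ := h₁
  obtain ⟨f, hf, h2⟩ := h₂
  refine ⟨e * f, idem_mul_idem he hf, ?_⟩
  calc a * (e * f) = a * e * f := (mul_assoc _ _ _).symm
  _ = b * e * f := by rw [h1]
  _ = b * (e * f) := mul_assoc _ _ _
  _ = b * (f * e) := by rw [InverseMonoid.idem_comm e f he hf]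
  _ = b * f * e := (mul_assoc _ _ _).symm
  _ = c * f * e := by rw [h2]
  _ = c * (f * e) := mul_assoc _ _ _
  _ = c * (e * f) := by rw [InverseMonoid.idem_comm e f he hf]

lemma sigma_mul_left {a b : S} (c : S) (h : sigma a b) : sigma (c * a) (c * b) := by
  obtain ⟨e, he, hab⟩ := h
  exact ⟨e, he, by rw [mul_assoc, hab, ← mul_assoc]⟩

lemma inner_lemma {e : S} (he : e * e = e) (a : S) :
    a⁻¹ * (a * e * a⁻¹) = e * a⁻¹ := by
  calc a⁻¹ * (a * e * a⁻¹) = a⁻¹ * (a * e) * a⁻¹ := by rw [← mul_assoc a⁻¹ (a * e) a⁻¹]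
  _ = a⁻¹ * a * e * a⁻¹ := by rw [← mul_assoc a⁻¹ a e]
  _ = e * (a⁻¹ * a) * a⁻¹ := by rw [InverseMonoid.idem_comm (a⁻¹ * a) e (inv_mul_idem a) he]
  _ = e * (a⁻¹ * a * a⁻¹) := by rw [mul_assoc e (a⁻¹ * a) a⁻¹]
  _ = e * a⁻¹ := by rw [inv_mul_self_mul]

lemma sigma_inv {a b : S} (h : sigma a b) : sigma a⁻¹ b⁻¹ := by
  obtain ⟨e, he, hab⟩ := h
  have key5 : e * a⁻¹ = e * b⁻¹ := by
    have h' : (a * e)⁻¹ = (b * e)⁻¹ := by rw [hab]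
    rwa [InverseMonoid.mul_inv_rev, InverseMonoid.mul_inv_rev, idem_inv he] at h'
  have key1 : (a * e * a⁻¹) * (a * e * a⁻¹) = a * e * a⁻¹ := by
    calc (a * e * a⁻¹) * (a * e * a⁻¹) = a * e * (a⁻¹ * (a * e * a⁻¹)) := mul_assoc _ _ _
    _ = a * e * (e * a⁻¹) := by rw [inner_lemma he a]
    _ = a * e * e * a⁻¹ := (mul_assoc _ _ _).symm
    _ = a * (e * e) * a⁻¹ := by rw [mul_assoc a e e]
    _ = a * e * a⁻¹ := by rw [he]
  have key3 : a * e * a⁻¹ = b * e * b⁻¹ := by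
    calc a * e * a⁻¹ = a * (e * e) * a⁻¹ := by rw [he]
    _ = a * e * e * a⁻¹ := by rw [← mul_assoc a e e]
    _ = a * e * (e * a⁻¹) := mul_assoc _ _ _
    _ = a * e * (e * b⁻¹) := by rw [key5]
    _ = b * e * (e * b⁻¹) := by rw [hab]
    _ = b * e * e * b⁻¹ := (mul_assoc _ _ _).symm
    _ = b * (e * e) * b⁻¹ := by rw [mul_assoc b e e]
    _ = b * e * b⁻¹ := by rw [he]
  refine ⟨a * e * a⁻¹, key1, ?_⟩
  rw [inner_lemma he a, key5, key3, inner_lemma he b]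

lemma sigma_mul_right {a b : S} (c : S) (h : sigma a b) : sigma (a * c) (b * c) := by
  have h1 := sigma_mul_left c⁻¹ (sigma_inv h)
  have h2 := sigma_inv h1
  rwa [InverseMonoid.mul_inv_rev c⁻¹ a⁻¹, InverseMonoid.mul_inv_rev c⁻¹ b⁻¹,
    InverseMonoid.inv_inv, InverseMonoid.inv_inv, InverseMonoid.inv_inv] at h2

instance sigmaSetoid (S : Type u) [InverseMonoid S] : Setoid S where
  r := sigma
  iseqv := ⟨sigma_refl, sigma_symm, sigma_trans⟩

/-- The maximum group quotient `S/σ`. -/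
def GQuot (S : Type u) [InverseMonoid S] : Type u := Quotient (sigmaSetoid S)

/-- The σ-class of an element, as an element of the maximum group quotient. -/
def σclass {S : Type u} [InverseMonoid S] (a : S) : GQuot S := Quotient.mk (sigmaSetoid S) a

instance (S : Type u) [InverseMonoid S] : Group (GQuot S) where
  mul := Quotient.map₂ (· * ·) (fun _ _ h₁ _ _ h₂ =>
    sigma_trans (sigma_mul_right _ h₁) (sigma_mul_left _ h₂))
  one := σclass 1
  inv := Quotient.map (·⁻¹) (fun _ _ h => sigma_inv h)
  mul_assoc := by
    intro a b c
    induction a using Quotient.ind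
    induction b using Quotient.ind
    induction c using Quotient.ind
    exact congrArg (Quotient.mk _) (mul_assoc _ _ _)
  one_mul := by
    intro a
    induction a using Quotient.ind
    exact congrArg (Quotient.mk _) (one_mul _)
  mul_one := by
    intro a
    induction a using Quotient.ind
    exact congrArg (Quotient.mk _) (mul_one _)
  inv_mul_cancel := by
    intro a
    induction a using Quotient.ind with
    | _ a =>
      refine Quotient.sound ⟨a⁻¹ * a, inv_mul_idem a, ?_⟩
      rw [one_mul]
      exact inv_mul_idem a

end InverseMonoidLemmas


section Graphs

variable {G : Type u} [Group G] {X : Type v}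

/-- A subgraph of the Cayley graph `Cay(G)` of the `X`-generated group `G` (with assignment
mapping `φ : X → G`), represented by its set of vertices and its set of positive edges:
the positive edge `(g, x)` goes from `g` to `g * φ x` and carries the label `x`; every
subgraph closed under edge inversion is uniquely determined by this data. -/
structure Subgraph (φ : X → G) : Type (max u v) where
  verts : Set G
  edges : Set (G × X)
  src_mem : ∀ e ∈ edges, Prod.fst e ∈ verts
  tgt_mem : ∀ e ∈ edges, e.1 * φ e.2 ∈ verts

namespace Subgraph

variable {φ : X → G}

lemma ext' {Γ Δ : Subgraph φ} (hv : Γ.verts = Δ.verts) (he : Γ.edges = Δ.edges) : Γ = Δ := by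
  cases Γ; cases Δ; cases hv; cases he; rfl

/-- Union of subgraphs. -/
def union (Γ Δ : Subgraph φ) : Subgraph φ where
  verts := Γ.verts ∪ Δ.verts
  edges := Γ.edges ∪ Δ.edges
  src_mem := by
    intro e he
    rcases he with h | h
    · exact Set.mem_union_left _ (Γ.src_mem e h)
    · exact Set.mem_union_right _ (Δ.src_mem e h)
  tgt_mem := by
    intro e he
    rcases he with h | h
    · exact Set.mem_union_left _ (Γ.tgt_mem e h)
    · exact Set.mem_union_right _ (Δ.tgt_mem e h)

instance : Union (Subgraph φ) := ⟨union⟩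

@[simp] lemma union_verts (Γ Δ : Subgraph φ) : (Γ ∪ Δ).verts = Γ.verts ∪ Δ.verts := rfl
@[simp] lemma union_edges (Γ Δ : Subgraph φ) : (Γ ∪ Δ).edges = Γ.edges ∪ Δ.edges := rfl

/-- Left translation of a subgraph by a group element. -/
def smul (g : G) (Γ : Subgraph φ) : Subgraph φ where
  verts := (g * ·) '' Γ.verts
  edges := (fun e => (g * e.1, e.2)) '' Γ.edges
  src_mem := by
    rintro e ⟨e', he', rfl⟩
    exact ⟨e'.1, Γ.src_mem e' he', rfl⟩
  tgt_mem := by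
    rintro e ⟨e', he', rfl⟩
    exact ⟨e'.1 * φ e'.2, Γ.tgt_mem e' he', (mul_assoc g e'.1 (φ e'.2)).symm⟩

instance : SMul G (Subgraph φ) := ⟨smul⟩

@[simp] lemma smul_verts (g : G) (Γ : Subgraph φ) : (g • Γ).verts = (g * ·) '' Γ.verts := rfl
@[simp] lemma smul_edges (g : G) (Γ : Subgraph φ) :
    (g • Γ).edges = (fun e : G × X => (g * e.1, e.2)) '' Γ.edges := rfl

/-- The subgraph relation. -/
instance : HasSubset (Subgraph φ) := ⟨fun Γ Δ => Γ.verts ⊆ Δ.verts ∧ Γ.edges ⊆ Δ.edges⟩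

lemma subset_iff (Γ Δ : Subgraph φ) : Γ ⊆ Δ ↔ Γ.verts ⊆ Δ.verts ∧ Γ.edges ⊆ Δ.edges := Iff.rfl

/-- Finiteness of a subgraph. -/
def IsFinite (Γ : Subgraph φ) : Prop := Γ.verts.Finite ∧ Γ.edges.Finite

/-- A subgraph has no isolated vertices if each of its vertices is an endpoint of one
of its edges. -/
def NoIsolated (Γ : Subgraph φ) : Prop :=
  ∀ v ∈ Γ.verts, ∃ e ∈ Γ.edges, v = e.1 ∨ v = e.1 * φ e.2

/-- `Ed(Γ)`: the subgraph spanned by the edges of `Γ`, i.e. `Γ` with all isolated vertices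
removed. -/
def ed (Γ : Subgraph φ) : Subgraph φ where
  verts := {v | ∃ e ∈ Γ.edges, v = e.1 ∨ v = e.1 * φ e.2}
  edges := Γ.edges
  src_mem := fun e he => ⟨e, he, Or.inl rfl⟩
  tgt_mem := fun e he => ⟨e, he, Or.inr rfl⟩

lemma ed_finite {Γ : Subgraph φ} (h : Γ.IsFinite) : Γ.ed.IsFinite := by
  constructor
  · have hsub : Γ.ed.verts ⊆
        (fun e : G × X => e.1) '' Γ.edges ∪ (fun e : G × X => e.1 * φ e.2) '' Γ.edges := by
      rintro v ⟨e, he, rfl | rfl⟩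
      · exact Set.mem_union_left _ ⟨e, he, rfl⟩
      · exact Set.mem_union_right _ ⟨e, he, rfl⟩
    exact ((h.2.image _).union (h.2.image _)).subset hsub
  · exact h.2

lemma ed_noIsolated (Γ : Subgraph φ) : Γ.ed.NoIsolated := fun _ hv => hv

end Subgraph

open Subgraph

variable {φ : X → G}

/-- The subgraph with the single vertex `g` and no edges. -/
def vertexG (φ : X → G) (g : G) : Subgraph φ :=
  ⟨{g}, ∅, by simp, by simp⟩

/-- `Δ_g`: the edgeless subgraph with vertices `1` and `g`. -/
def deltaG (φ : X → G) (g : G) : Subgraph φ :=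
  ⟨{1, g}, ∅, by simp, by simp⟩

/-- The subgraph spanned by a single (positive) edge. -/
def edgeG (φ : X → G) (e : G × X) : Subgraph φ where
  verts := {e.1, e.1 * φ e.2}
  edges := {e}
  src_mem := by
    intro e' he'
    rw [Set.mem_singleton_iff] at he'
    subst he'
    exact Set.mem_insert _ _
  tgt_mem := by
    intro e' he'
    rw [Set.mem_singleton_iff] at he'
    subst he'
    exact Set.mem_insert_of_mem _ rfl

/-- The empty subgraph. -/
def emptyG (φ : X → G) : Subgraph φ := ⟨∅, ∅, by simp, by simp⟩

lemma edgeG_noIsolated (φ : X → G) (e : G × X) : (edgeG φ e).NoIsolated := by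
  intro v hv
  refine ⟨e, Set.mem_singleton e, ?_⟩
  simpa [edgeG] using hv

/-- Two vertices are adjacent in `Γ` if they are connected by an edge of `Γ`. -/
def adj (Γ : Subgraph φ) (u v : G) : Prop :=
  ∃ e ∈ Γ.edges, (u = e.1 ∧ v = e.1 * φ e.2) ∨ (v = e.1 ∧ u = e.1 * φ e.2)

/-- A subgraph is connected if any two of its vertices are joined by a path running in it. -/
def Connected (Γ : Subgraph φ) : Prop :=
  ∀ u ∈ Γ.verts, ∀ v ∈ Γ.verts, Relation.ReflTransGen (adj Γ) u v

lemma adj_mono {Γ Δ : Subgraph φ} (h : Γ.edges ⊆ Δ.edges) {u v : G} (ha : adj Γ u v) :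
    adj Δ u v := by
  obtain ⟨e, he, hc⟩ := ha
  exact ⟨e, h he, hc⟩

lemma Connected.union {Γ Δ : Subgraph φ} (hΓ : Connected Γ) (hΔ : Connected Δ) (w : G)
    (hw₁ : w ∈ Γ.verts) (hw₂ : w ∈ Δ.verts) : Connected (Γ ∪ Δ) := by
  have hsΓ : Γ.edges ⊆ (Γ ∪ Δ).edges := by
    rw [union_edges]; exact Set.subset_union_left
  have hsΔ : Δ.edges ⊆ (Γ ∪ Δ).edges := by
    rw [union_edges]; exact Set.subset_union_right
  have mΓ : ∀ {p q : G}, Relation.ReflTransGen (adj Γ) p q →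
      Relation.ReflTransGen (adj (Γ ∪ Δ)) p q :=
    fun h => Relation.ReflTransGen.mono (fun _ _ h' => adj_mono hsΓ h') _ _ h
  have mΔ : ∀ {p q : G}, Relation.ReflTransGen (adj Δ) p q →
      Relation.ReflTransGen (adj (Γ ∪ Δ)) p q :=
    fun h => Relation.ReflTransGen.mono (fun _ _ h' => adj_mono hsΔ h') _ _ h
  intro u hu v hv
  rw [union_verts] at hu hv
  rcases hu with hu | hu <;> rcases hv with hv | hv
  · exact mΓ (hΓ u hu v hv)
  · exact (mΓ (hΓ u hu w hw₁)).trans (mΔ (hΔ w hw₂ v hv))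
  · exact (mΔ (hΔ u hu w hw₂)).trans (mΓ (hΓ w hw₁ v hv))
  · exact mΔ (hΔ u hu v hv)

lemma Connected.smul {Γ : Subgraph φ} (g : G) (h : Connected Γ) : Connected (g • Γ) := by
  intro u hu v hv
  rw [smul_verts] at hu hv
  obtain ⟨u', hu', rfl⟩ := hu
  obtain ⟨v', hv', rfl⟩ := hv
  refine Relation.ReflTransGen.lift (p := adj (g • Γ)) (fun z => g * z) ?_ _ _ (h u' hu' v' hv')
  intro p q hpq
  obtain ⟨e, he, hc⟩ := hpq
  show adj (g • Γ) (g * p) (g * q)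
  refine ⟨(g * e.1, e.2), ?_, ?_⟩
  · rw [smul_edges]; exact ⟨e, he, rfl⟩
  · rcases hc with ⟨rfl, rfl⟩ | ⟨rfl, rfl⟩
    · exact Or.inl ⟨rfl, (mul_assoc _ _ _).symm⟩
    · exact Or.inr ⟨rfl, (mul_assoc _ _ _).symm⟩

lemma Subgraph.NoIsolated.union {Γ Δ : Subgraph φ} (hΓ : Γ.NoIsolated) (hΔ : Δ.NoIsolated) :
    (Γ ∪ Δ).NoIsolated := by
  intro v hv
  rw [union_verts] at hv
  rcases hv with hv | hv
  · obtain ⟨e, he, hor⟩ := hΓ v hv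
    exact ⟨e, by rw [union_edges]; exact Set.mem_union_left _ he, hor⟩
  · obtain ⟨e, he, hor⟩ := hΔ v hv
    exact ⟨e, by rw [union_edges]; exact Set.mem_union_right _ he, hor⟩

lemma Subgraph.NoIsolated.smul {Γ : Subgraph φ} (g : G) (h : Γ.NoIsolated) :
    (g • Γ).NoIsolated := by
  intro v hv
  rw [smul_verts] at hv
  obtain ⟨u, hu, rfl⟩ := hv
  obtain ⟨e, he, hor⟩ := h u hu
  refine ⟨(g * e.1, e.2), by rw [smul_edges]; exact ⟨e, he, rfl⟩, ?_⟩
  rcases hor with rfl | rfl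
  · exact Or.inl rfl
  · exact Or.inr (mul_assoc _ _ _).symm

end Graphs


section Expansions

variable {G : Type u} [Group G] {X : Type v} {φ : X → G}

open Subgraph

/-- `F(G)`: pairs `(Γ, g)` where `Γ` is a finite subgraph of `Cay(G)` having `1` and `g`
among its vertices. -/
structure FExp (φ : X → G) : Type (max u v) where
  graph : Subgraph φ
  elt : G
  finite : graph.IsFinite
  one_mem : (1 : G) ∈ graph.verts
  elt_mem : elt ∈ graph.verts

namespace FExp

lemma ext' {a b : FExp φ} (hg : a.graph = b.graph) (he : a.elt = b.elt) : a = b := by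
  cases a; cases b; cases hg; cases he; rfl

instance : Mul (FExp φ) :=
  ⟨fun a b =>
    { graph := a.graph ∪ a.elt • b.graph
      elt := a.elt * b.elt
      finite := ⟨by
          rw [union_verts, smul_verts]
          exact a.finite.1.union (b.finite.1.image _),
        by
          rw [union_edges, smul_edges]
          exact a.finite.2.union (b.finite.2.image _)⟩
      one_mem := by
        rw [union_verts]
        exact Set.mem_union_left _ a.one_mem
      elt_mem := by
        rw [union_verts]
        refine Set.mem_union_right _ ?_
        rw [smul_verts]
        exact ⟨b.elt, b.elt_mem, rfl⟩ }⟩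

@[simp] lemma mul_graph (a b : FExp φ) : (a * b).graph = a.graph ∪ a.elt • b.graph := rfl
@[simp] lemma mul_elt (a b : FExp φ) : (a * b).elt = a.elt * b.elt := rfl

instance : One (FExp φ) :=
  ⟨{ graph := deltaG φ 1
     elt := 1
     finite := ⟨(Set.finite_singleton (1 : G)).insert 1, Set.finite_empty⟩
     one_mem := Set.mem_insert 1 _
     elt_mem := Set.mem_insert 1 _ }⟩

@[simp] lemma one_graph : (1 : FExp φ).graph = deltaG φ 1 := rfl
@[simp] lemma one_elt : (1 : FExp φ).elt = 1 := rfl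

instance : Inv (FExp φ) :=
  ⟨fun a =>
    { graph := a.elt⁻¹ • a.graph
      elt := a.elt⁻¹
      finite := ⟨by rw [smul_verts]; exact a.finite.1.image _,
        by rw [smul_edges]; exact a.finite.2.image _⟩
      one_mem := by
        rw [smul_verts]
        exact ⟨a.elt, a.elt_mem, inv_mul_cancel a.elt⟩
      elt_mem := by
        rw [smul_verts]
        exact ⟨1, a.one_mem, mul_one _⟩ }⟩

@[simp] lemma inv_graph (a : FExp φ) : (a⁻¹).graph = a.elt⁻¹ • a.graph := rfl
@[simp] lemma inv_elt (a : FExp φ) : (a⁻¹).elt = a.elt⁻¹ := rfl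

end FExp

/-- The element `(Δ_g, g)` of `F(G)`. -/
def maxElt (φ : X → G) (g : G) : FExp φ where
  graph := deltaG φ g
  elt := g
  finite := ⟨(Set.finite_singleton g).insert 1, Set.finite_empty⟩
  one_mem := Set.mem_insert 1 _
  elt_mem := Set.mem_insert_of_mem _ rfl

/-- The max-operation `(Γ, g) ↦ (Δ_g, g)` on `F(G)`. -/
def mxOp (a : FExp φ) : FExp φ := maxElt φ a.elt

/-- The generator `(Γ_x, x_G)` of `F(G)`. -/
def genElt (φ : X → G) (x : X) : FExp φ where
  graph := edgeG φ (1, x)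
  elt := φ x
  finite := ⟨(Set.finite_singleton _).insert _, Set.finite_singleton _⟩
  one_mem := Set.mem_insert 1 _
  elt_mem := by simp [edgeG]

/-- `M(G)`: the Margolis–Meakin expansion; pairs `(Γ, g)` where `Γ` is a finite *connected*
subgraph of `Cay(G)` having `1` and `g` among its vertices. -/
structure MExp (φ : X → G) : Type (max u v) where
  graph : Subgraph φ
  elt : G
  finite : graph.IsFinite
  connected : Connected graph
  one_mem : (1 : G) ∈ graph.verts
  elt_mem : elt ∈ graph.verts

namespace MExp

instance : Mul (MExp φ) :=
  ⟨fun a b =>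
    { graph := a.graph ∪ a.elt • b.graph
      elt := a.elt * b.elt
      finite := ⟨by
          rw [union_verts, smul_verts]
          exact a.finite.1.union (b.finite.1.image _),
        by
          rw [union_edges, smul_edges]
          exact a.finite.2.union (b.finite.2.image _)⟩
      connected := by
        refine Connected.union a.connected (Connected.smul a.elt b.connected) a.elt a.elt_mem ?_
        rw [smul_verts]
        exact ⟨1, b.one_mem, mul_one _⟩
      one_mem := by
        rw [union_verts]
        exact Set.mem_union_left _ a.one_mem
      elt_mem := by
        rw [union_verts]
        refine Set.mem_union_right _ ?_
        rw [smul_verts]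
        exact ⟨b.elt, b.elt_mem, rfl⟩ }⟩

end MExp

/-- `P(G)`: pairs `(Γ, g)` where `Γ` is a finite subgraph of `Cay(G)` without isolated
vertices and `g ∈ G` (a model of the semidirect product of the semilattice of such
subgraphs by `G`). -/
structure PExp (φ : X → G) : Type (max u v) where
  graph : Subgraph φ
  elt : G
  finite : graph.IsFinite
  noIsolated : graph.NoIsolated

namespace PExp

lemma ext' {a b : PExp φ} (hg : a.graph = b.graph) (he : a.elt = b.elt) : a = b := by
  cases a; cases b; cases hg; cases he; rfl

instance : Mul (PExp φ) :=
  ⟨fun a b =>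
    { graph := a.graph ∪ a.elt • b.graph
      elt := a.elt * b.elt
      finite := ⟨by
          rw [union_verts, smul_verts]
          exact a.finite.1.union (b.finite.1.image _),
        by
          rw [union_edges, smul_edges]
          exact a.finite.2.union (b.finite.2.image _)⟩
      noIsolated := a.noIsolated.union (b.noIsolated.smul a.elt) }⟩

@[simp] lemma mul_graph (a b : PExp φ) : (a * b).graph = a.graph ∪ a.elt • b.graph := rfl
@[simp] lemma mul_elt (a b : PExp φ) : (a * b).elt = a.elt * b.elt := rfl

instance : One (PExp φ) :=
  ⟨{ graph := emptyG φ
     elt := 1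
     finite := ⟨Set.finite_empty, Set.finite_empty⟩
     noIsolated := by intro v hv; simp [emptyG] at hv }⟩

@[simp] lemma one_graph : (1 : PExp φ).graph = emptyG φ := rfl
@[simp] lemma one_elt : (1 : PExp φ).elt = 1 := rfl

instance : Inv (PExp φ) :=
  ⟨fun a =>
    { graph := a.elt⁻¹ • a.graph
      elt := a.elt⁻¹
      finite := ⟨by rw [smul_verts]; exact a.finite.1.image _,
        by rw [smul_edges]; exact a.finite.2.image _⟩
      noIsolated := a.noIsolated.smul _ }⟩

@[simp] lemma inv_graph (a : PExp φ) : (a⁻¹).graph = a.elt⁻¹ • a.graph := rfl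
@[simp] lemma inv_elt (a : PExp φ) : (a⁻¹).elt = a.elt⁻¹ := rfl

end PExp

/-- The max-operation `(Γ, g) ↦ (∅, g)` on `P(G)`. -/
def pMax (a : PExp φ) : PExp φ where
  graph := emptyG φ
  elt := a.elt
  finite := ⟨Set.finite_empty, Set.finite_empty⟩
  noIsolated := by intro v hv; simp [emptyG] at hv

/-- The generator `(Γ_x, x_G)` of `P(G)`. -/
def genEltP (φ : X → G) (x : X) : PExp φ where
  graph := edgeG φ (1, x)
  elt := φ x
  finite := ⟨(Set.finite_singleton _).insert _, Set.finite_singleton _⟩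
  noIsolated := edgeG_noIsolated φ (1, x)

/-- The canonical map `F(G) → P(G)`, `(Γ, g) ↦ (Ed(Γ), g)`. -/
def edMap (a : FExp φ) : PExp φ where
  graph := a.graph.ed
  elt := a.elt
  finite := ed_finite a.finite
  noIsolated := a.graph.ed_noIsolated

/-- The relation `θ` on `F(G)`: `(Γ,g) θ (Ξ,h)` iff `g = h` and `Ed(Γ) = Ed(Ξ)`. -/
def thetaRel (φ : X → G) (a b : FExp φ) : Prop := a.elt = b.elt ∧ a.graph.ed = b.graph.ed

end Expansions

section Terms

variable {X : Type v}

/-- Terms of the term algebra `I^m_X` in their (unique) normal form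
`u₀ · m(v₁) · u₁ ⋯ u_{n-1} · m(vₙ) · uₙ` with `uᵢ, vⱼ` words in the free monoid with
involution `I_X` on `X` (represented as lists over `X ⊕ X`, where `inl x` stands for `x`
and `inr x` for `x⁻¹`): the first component is `u₀`, and the second lists the pairs
`(vᵢ, uᵢ)`. -/
abbrev MTerm (X : Type v) := List (X ⊕ X) × List (List (X ⊕ X) × List (X ⊕ X))

/-- Value of a letter of `X ⊔ X⁻¹`. -/
def letterVal {M : Type w} [Monoid M] [Inv M] (f : X → M) : X ⊕ X → M
  | Sum.inl x => f x
  | Sum.inr x => (f x)⁻¹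

/-- Value of a word of `I_X`. -/
def wordVal {M : Type w} [Monoid M] [Inv M] (f : X → M) (u : List (X ⊕ X)) : M :=
  (u.map (letterVal f)).prod

/-- Value `[t]` of a term `t ∈ I^m_X` under the assignment `f` of the generators,
where `mop` is interpreted as the operation `m`. -/
def termVal {M : Type w} [Monoid M] [Inv M] (f : X → M) (mop : M → M) (t : MTerm X) : M :=
  wordVal f t.1 * (t.2.map (fun p => mop (wordVal f p.1) * wordVal f p.2)).prod

end Terms

section Journeys

variable {G : Type u} [Group G] {X : Type v}

/-- The subgraph of `Cay(G)` spanned by the path starting at `g` with label the given word;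
for the empty word it is the single vertex `g`. -/
def pathGraph (φ : X → G) : G → List (X ⊕ X) → Subgraph φ
  | g, [] => vertexG φ g
  | g, Sum.inl x :: u => edgeG φ (g, x) ∪ pathGraph φ (g * φ x) u
  | g, Sum.inr x :: u => edgeG φ (g * (φ x)⁻¹, x) ∪ pathGraph φ (g * (φ x)⁻¹) u

/-- The subgraph of `Cay(G)` spanned by the journey `j_g(w)` induced by the term
`w = u₀ · m(v₁) · u₁ ⋯ · m(vₙ) · uₙ` starting at `g`: traverse the path labelled `u₀`
from `g`, jump to `g·[u₀v₁]`, traverse the path labelled `u₁`, and so on. -/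
def journeyGraph (φ : X → G) : G → List (X ⊕ X) → List (List (X ⊕ X) × List (X ⊕ X)) →
    Subgraph φ
  | g, u, [] => pathGraph φ g u
  | g, u, (v, u') :: rest =>
      pathGraph φ g u ∪ journeyGraph φ (g * wordVal φ u * wordVal φ v) u' rest

end Journeys

section InverseMonoid

variable {S : Type w} [InverseMonoid S]

lemma isIdempotentElem_conj {e : S} (he : IsIdempotentElem e) (a : S) :
    IsIdempotentElem (a * e * a⁻¹) := by
  calc a * e * a⁻¹ * (a * e * a⁻¹) = a * e * (a⁻¹ * (a * e * a⁻¹)) := mul_assoc _ _ _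
  _ = a * (e * e) * a⁻¹ := by rw [inner_lemma he a]; simp only [mul_assoc]
  _ = a * e * a⁻¹ := by rw [he.eq]

lemma nle_antisymm {a b : S} (hab : nle a b) (hba : nle b a) : a = b := by
  obtain ⟨e, he, rfl⟩ := hab
  obtain ⟨f, hf, hbf⟩ := hba
  have hbf' : b * f = b := by rw [hbf, mul_assoc, hf, ← hbf]
  calc b * e = b * f * e := by rw [hbf']
  _ = b * e * f := by rw [mul_assoc, InverseMonoid.idem_comm f e hf he, ← mul_assoc]
  _ = b := hbf.symm

lemma inv_eq_of_mul_eq_one {a b : S} (hab : a * b = 1) (hba : b * a = 1) : a⁻¹ = b := by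
  have ha : a * a⁻¹ = 1 := by
    calc a * a⁻¹ = a * (a⁻¹ * (a * b)) := by rw [hab, mul_one]
    _ = a * b := by rw [← mul_assoc, ← mul_assoc, InverseMonoid.mul_inv_self_mul]
    _ = 1 := hab
  calc a⁻¹ = b * a * a⁻¹ := by rw [hba, one_mul]
  _ = b := by rw [mul_assoc, ha, mul_one]

lemma sigma_idem_mul {e : S} (he : IsIdempotentElem e) (c : S) : sigma (e * c) c := by
  have hc := isIdempotentElem_conj he c⁻¹
  rw [InverseMonoid.inv_inv] at hc
  refine ⟨c⁻¹ * e * c, hc, ?_⟩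
  have hcomm : e * (c * c⁻¹) = c * c⁻¹ * e :=
    InverseMonoid.idem_comm e (c * c⁻¹) he (mul_inv_idem c)
  calc e * c * (c⁻¹ * e * c) = e * (c * c⁻¹) * e * c := by simp only [mul_assoc]
  _ = c * c⁻¹ * (e * e) * c := by rw [hcomm]; simp only [mul_assoc]
  _ = c * (c⁻¹ * e * c) := by rw [he.eq]; simp only [mul_assoc]

lemma mul_inv_mul_of_nle {a b : S} (h : nle a b) : a * a⁻¹ * b = a := by
  obtain ⟨e, he, rfl⟩ := h
  have hcomm : e * (b⁻¹ * b) = b⁻¹ * b * e :=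
    InverseMonoid.idem_comm e (b⁻¹ * b) he (inv_mul_idem b)
  calc b * e * (b * e)⁻¹ * b = b * (e * e) * (b⁻¹ * b) := by
        rw [InverseMonoid.mul_inv_rev, idem_inv he]; simp only [mul_assoc]
  _ = b * b⁻¹ * b * e := by rw [he, mul_assoc, hcomm]; simp only [mul_assoc]
  _ = b * e := by rw [InverseMonoid.mul_inv_self_mul]

end InverseMonoid

section FInverseMonoid

variable {F : Type w} [FInverseMonoid F]

lemma mx_sigma (a : F) : sigma (mx a) a := (FInverseMonoid.mx_isMaxOp a).1

lemma nle_mx_of_sigma {a b : F} (h : sigma b a) : nle b (mx a) :=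
  (FInverseMonoid.mx_isMaxOp a).2 b h

lemma mx_eq_of_sigma {a b : F} (h : sigma a b) : mx a = mx b :=
  nle_antisymm (nle_mx_of_sigma (sigma_trans (mx_sigma a) h))
    (nle_mx_of_sigma (sigma_trans (mx_sigma b) (sigma_symm h)))

lemma mx_mx (a : F) : mx (mx a) = mx a := mx_eq_of_sigma (mx_sigma a)

lemma mx_one_of_perfect (hp : ∀ a b : F, mx a * mx b = mx (a * b)) : mx (1 : F) = 1 := by
  obtain ⟨e, -, he⟩ := nle_mx_of_sigma (sigma_refl (1 : F))
  calc mx (1 : F) = mx 1 * (mx 1 * e) := by rw [← he, mul_one]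
  _ = 1 := by rw [← mul_assoc, hp, mul_one, ← he]

def maxHom (hp : ∀ a b : F, mx a * mx b = mx (a * b)) : GQuot F →* F where
  toFun := Quotient.lift mx fun _ _ h => mx_eq_of_sigma h
  map_one' := mx_one_of_perfect hp
  map_mul' := by
    rintro ⟨a⟩ ⟨b⟩
    exact (hp a b).symm

variable (hp : ∀ a b : F, mx a * mx b = mx (a * b))

lemma maxHom_σclass (a : F) : maxHom hp (σclass a) = mx a := rfl

lemma mx_maxHom (p : GQuot F) : mx (maxHom hp p) = maxHom hp p := by
  induction p using Quotient.ind with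
  | _ a => exact mx_mx a

lemma σclass_maxHom (p : GQuot F) : σclass (maxHom hp p) = p := by
  induction p using Quotient.ind with
  | _ a => exact Quotient.sound (mx_sigma a)

end FInverseMonoid

section Lift

open scoped Classical

variable {G : Type u} [Group G] {X : Type v} {φ : X → G}
variable {F : Type w} [InverseMonoid F] (f : X → F) (μ : G →* F)

lemma map_inv_mul_cancel_left (g : G) (s : F) : μ g⁻¹ * (μ g * s) = s := by
  rw [← mul_assoc, ← map_mul, inv_mul_cancel, map_one, one_mul]

lemma inv_map_eq_map_inv (g : G) : (μ g)⁻¹ = μ g⁻¹ :=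
  inv_eq_of_mul_eq_one (by rw [← map_mul, mul_inv_cancel, map_one])
    (by rw [← map_mul, inv_mul_cancel, map_one])

lemma map_conj_mul_map_conj (g : G) (s t : F) :
    μ g * s * μ g⁻¹ * (μ g * t * μ g⁻¹) = μ g * (s * t) * μ g⁻¹ := by
  simp only [mul_assoc, map_inv_mul_cancel_left]

lemma isIdempotentElem_map_conj {e : F} (he : IsIdempotentElem e) (g : G) :
    IsIdempotentElem (μ g * e * μ g⁻¹) := by
  rw [IsIdempotentElem, map_conj_mul_map_conj, he.eq]

/-- The image of `(g·Γ_x, 1) = (∅, g)·(Γ_x, x_G)·(Γ_x, x_G)⁻¹·(∅, g)⁻¹ ∈ P(G)`. -/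
def edgeIdem (e : G × X) : F := μ e.1 * (f e.2 * (f e.2)⁻¹) * μ e.1⁻¹

lemma isIdempotentElem_edgeIdem (e : G × X) : IsIdempotentElem (edgeIdem f μ e) :=
  isIdempotentElem_map_conj μ (mul_inv_idem (f e.2)) e.1

lemma edgeIdem_translate (g : G) (e : G × X) :
    edgeIdem f μ (g * e.1, e.2) = μ g * edgeIdem f μ e * μ g⁻¹ := by
  simp only [edgeIdem, mul_inv_rev, map_mul, mul_assoc]

def edgesIdem (s : Finset (G × X)) : F :=
  s.noncommProd (edgeIdem f μ) fun a _ b _ _ =>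
    InverseMonoid.idem_comm _ _ (isIdempotentElem_edgeIdem f μ a)
      (isIdempotentElem_edgeIdem f μ b)

lemma edgesIdem_empty : edgesIdem f μ ∅ = 1 := Finset.noncommProd_empty _ _

lemma edgesIdem_singleton (e : G × X) : edgesIdem f μ {e} = edgeIdem f μ e :=
  Finset.noncommProd_singleton _ _

lemma edgesIdem_insert_of_notMem {e : G × X} {s : Finset (G × X)} (he : e ∉ s) :
    edgesIdem f μ (insert e s) = edgeIdem f μ e * edgesIdem f μ s :=
  Finset.noncommProd_insert_of_notMem _ _ _ _ he

lemma edgeIdem_mul_edgesIdem_of_mem {e : G × X} {s : Finset (G × X)} (he : e ∈ s) :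
    edgeIdem f μ e * edgesIdem f μ s = edgesIdem f μ s := by
  induction s using Finset.induction_on with
  | empty => exact absurd he (Finset.notMem_empty e)
  | @insert b t hb ih =>
    rw [edgesIdem_insert_of_notMem f μ hb]
    rcases Finset.mem_insert.mp he with rfl | het
    · rw [← mul_assoc, (isIdempotentElem_edgeIdem f μ e).eq]
    · rw [← mul_assoc, InverseMonoid.idem_comm _ _ (isIdempotentElem_edgeIdem f μ e)
        (isIdempotentElem_edgeIdem f μ b), mul_assoc, ih het]

lemma edgesIdem_insert (e : G × X) (s : Finset (G × X)) :
    edgesIdem f μ (insert e s) = edgeIdem f μ e * edgesIdem f μ s := by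
  by_cases he : e ∈ s
  · rw [Finset.insert_eq_of_mem he, edgeIdem_mul_edgesIdem_of_mem f μ he]
  · exact edgesIdem_insert_of_notMem f μ he

lemma edgesIdem_union (s t : Finset (G × X)) :
    edgesIdem f μ (s ∪ t) = edgesIdem f μ s * edgesIdem f μ t := by
  induction s using Finset.induction_on with
  | empty => rw [Finset.empty_union, edgesIdem_empty, one_mul]
  | @insert e s _ ih =>
    rw [Finset.insert_union, edgesIdem_insert, edgesIdem_insert, ih, mul_assoc]

lemma isIdempotentElem_edgesIdem (s : Finset (G × X)) : IsIdempotentElem (edgesIdem f μ s) := by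
  rw [IsIdempotentElem, ← edgesIdem_union, Finset.union_self]

lemma edgesIdem_image_translate (g : G) (s : Finset (G × X)) :
    edgesIdem f μ (s.image fun e => (g * e.1, e.2)) = μ g * edgesIdem f μ s * μ g⁻¹ := by
  induction s using Finset.induction_on with
  | empty => rw [Finset.image_empty, edgesIdem_empty, mul_one, ← map_mul, mul_inv_cancel, map_one]
  | @insert e s _ ih =>
    rw [Finset.image_insert, edgesIdem_insert, edgesIdem_insert, ih, edgeIdem_translate,
      map_conj_mul_map_conj]

noncomputable def PExp.lift (a : PExp φ) : F := edgesIdem f μ a.finite.2.toFinset * μ a.elt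

lemma PExp.lift_one : PExp.lift f μ (1 : PExp φ) = 1 := by
  have h : (1 : PExp φ).finite.2.toFinset = ∅ := by ext; simp [emptyG]
  rw [PExp.lift, h, edgesIdem_empty, PExp.one_elt, map_one, one_mul]

lemma PExp.lift_mul (a b : PExp φ) :
    PExp.lift f μ (a * b) = PExp.lift f μ a * PExp.lift f μ b := by
  have h : (a * b).finite.2.toFinset =
      a.finite.2.toFinset ∪ b.finite.2.toFinset.image fun e => (a.elt * e.1, e.2) := by
    ext; simp
  rw [PExp.lift, PExp.lift, PExp.lift, h, edgesIdem_union, edgesIdem_image_translate,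
    PExp.mul_elt, map_mul]
  simp only [mul_assoc, map_inv_mul_cancel_left]

lemma PExp.lift_inv (a : PExp φ) : PExp.lift f μ a⁻¹ = (PExp.lift f μ a)⁻¹ := by
  have h : (a⁻¹).finite.2.toFinset =
      a.finite.2.toFinset.image fun e => (a.elt⁻¹ * e.1, e.2) := by
    ext; simp
  rw [PExp.lift, PExp.lift, h, edgesIdem_image_translate, PExp.inv_elt, InverseMonoid.mul_inv_rev,
    idem_inv (isIdempotentElem_edgesIdem f μ _), inv_map_eq_map_inv, inv_inv, mul_assoc,
    ← map_mul, mul_inv_cancel, map_one, mul_one]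

lemma PExp.sigma_lift (a : PExp φ) : sigma (PExp.lift f μ a) (μ a.elt) :=
  sigma_idem_mul (isIdempotentElem_edgesIdem f μ _) _

end Lift

section LiftFInverse

variable {G : Type u} [Group G] {X : Type v} {φ : X → G}
variable {F : Type w} [FInverseMonoid F] (f : X → F) (μ : G →* F)

lemma PExp.lift_pMax (hmax : ∀ g, mx (μ g) = μ g) (a : PExp φ) :
    PExp.lift f μ (pMax a) = mx (PExp.lift f μ a) := by
  have h : (pMax a).finite.2.toFinset = ∅ := by ext; simp [pMax, emptyG]
  rw [PExp.lift, h, edgesIdem_empty, one_mul, mx_eq_of_sigma (PExp.sigma_lift f μ a), hmax]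
  rfl

lemma PExp.lift_genEltP (hgen : ∀ x, μ (φ x) = mx (f x)) (x : X) :
    PExp.lift f μ (genEltP φ x) = f x := by
  have h : (genEltP φ x).finite.2.toFinset = {(1, x)} := by ext; simp [genEltP, edgeG]
  rw [PExp.lift, h, edgesIdem_singleton, edgeIdem]
  simp only [inv_one, map_one, one_mul, mul_one]
  exact (congrArg _ (hgen x)).trans (mul_inv_mul_of_nle (nle_mx_of_sigma (sigma_refl (f x))))

end LiftFInverse

section EdMap

open scoped Classical

variable {G : Type u} [Group G] {X : Type v} {φ : X → G}

namespace Subgraph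

lemma ed_union (Γ Δ : Subgraph φ) : (Γ ∪ Δ).ed = Γ.ed ∪ Δ.ed := by
  refine Subgraph.ext' ?_ rfl
  ext v
  simp only [ed, union_verts, union_edges, Set.mem_union]
  constructor
  · rintro ⟨e, he | he, hv⟩
    exacts [Or.inl ⟨e, he, hv⟩, Or.inr ⟨e, he, hv⟩]
  · rintro (⟨e, he, hv⟩ | ⟨e, he, hv⟩)
    exacts [⟨e, Or.inl he, hv⟩, ⟨e, Or.inr he, hv⟩]

lemma ed_smul (g : G) (Γ : Subgraph φ) : (g • Γ).ed = g • Γ.ed := by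
  refine Subgraph.ext' ?_ rfl
  ext v
  simp only [ed, smul_verts, smul_edges, Set.mem_image]
  constructor
  · rintro ⟨_, ⟨e, he, rfl⟩, rfl | rfl⟩
    · exact ⟨e.1, ⟨e, he, Or.inl rfl⟩, rfl⟩
    · exact ⟨e.1 * φ e.2, ⟨e, he, Or.inr rfl⟩, (mul_assoc _ _ _).symm⟩
  · rintro ⟨_, ⟨e, he, rfl | rfl⟩, rfl⟩
    · exact ⟨(g * e.1, e.2), ⟨e, he, rfl⟩, Or.inl rfl⟩
    · exact ⟨(g * e.1, e.2), ⟨e, he, rfl⟩, Or.inr (mul_assoc _ _ _).symm⟩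

lemma ed_eq_self {Γ : Subgraph φ} (h : Γ.NoIsolated) : Γ.ed = Γ := by
  refine Subgraph.ext' (Set.Subset.antisymm ?_ h) rfl
  rintro v ⟨e, he, rfl | rfl⟩
  exacts [Γ.src_mem e he, Γ.tgt_mem e he]

lemma ed_deltaG (g : G) : (deltaG φ g).ed = emptyG φ :=
  Subgraph.ext' (by simp [ed, deltaG, emptyG]) rfl

lemma union_emptyG (Γ : Subgraph φ) : Γ ∪ emptyG φ = Γ :=
  Subgraph.ext' (Set.union_empty _) (Set.union_empty _)

lemma smul_emptyG (g : G) : g • emptyG φ = emptyG φ :=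
  Subgraph.ext' (Set.image_empty _) (Set.image_empty _)

end Subgraph

open Subgraph

@[simp] lemma edMap_graph (a : FExp φ) : (edMap a).graph = a.graph.ed := rfl

lemma edMap_surjective : Function.Surjective (edMap (φ := φ)) := fun p =>
  ⟨⟨p.graph ∪ deltaG φ p.elt, p.elt,
      ⟨p.finite.1.union ((Set.finite_singleton _).insert _), p.finite.2.union Set.finite_empty⟩,
      Or.inr (Set.mem_insert _ _), Or.inr (Set.mem_insert_of_mem _ rfl)⟩,
    PExp.ext' (by rw [edMap_graph, ed_union, ed_eq_self p.noIsolated, ed_deltaG, union_emptyG])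
      rfl⟩

lemma edMap_one : edMap (1 : FExp φ) = 1 := PExp.ext' (ed_deltaG 1) rfl

lemma edMap_mul (a b : FExp φ) : edMap (a * b) = edMap a * edMap b :=
  PExp.ext' (by rw [edMap_graph, FExp.mul_graph, ed_union, ed_smul]; rfl) rfl

lemma edMap_inv (a : FExp φ) : edMap a⁻¹ = (edMap a)⁻¹ :=
  PExp.ext' (by rw [edMap_graph, FExp.inv_graph, ed_smul]; rfl) rfl

lemma edMap_mxOp (a : FExp φ) : edMap (mxOp a) = pMax (edMap a) := PExp.ext' (ed_deltaG _) rfl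

lemma edMap_genElt (x : X) : edMap (genElt φ x) = genEltP φ x :=
  PExp.ext' (ed_eq_self (edgeG_noIsolated φ _)) rfl

lemma edMap_mxOp_mul_mxOp_inv (a : FExp φ) : edMap (mxOp a * mxOp a⁻¹) = edMap 1 := by
  refine PExp.ext' ?_ (mul_inv_cancel a.elt)
  rw [edMap_graph, edMap_graph, FExp.mul_graph, ed_union, ed_smul]
  simp only [mxOp, maxElt, ed_deltaG, smul_emptyG, union_emptyG, FExp.one_graph]

def FExp.addVerts (a : FExp φ) (V : Finset G) : FExp φ where
  graph := ⟨a.graph.verts ∪ V, a.graph.edges,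
    fun e he => Or.inl (a.graph.src_mem e he), fun e he => Or.inl (a.graph.tgt_mem e he)⟩
  elt := a.elt
  finite := ⟨a.finite.1.union V.finite_toSet, a.finite.2⟩
  one_mem := Or.inl a.one_mem
  elt_mem := Or.inl a.elt_mem

lemma FExp.addVerts_empty (a : FExp φ) : a.addVerts ∅ = a :=
  FExp.ext' (Subgraph.ext' (by simp [FExp.addVerts]) rfl) rfl

lemma FExp.addVerts_insert (a : FExp φ) (g : G) (V : Finset G) :
    a.addVerts (insert g V) = (a.addVerts V).addVerts {g} :=
  FExp.ext' (Subgraph.ext' (by simp [FExp.addVerts, Set.union_insert]) rfl) rfl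

lemma FExp.mul_one (a : FExp φ) : a * 1 = a := by
  refine FExp.ext' (Subgraph.ext' ?_ (by simp [deltaG])) (_root_.mul_one _)
  simp [deltaG, a.elt_mem]

lemma FExp.mul_mxOp_mul_mxOp_inv (a b : FExp φ) :
    a * (mxOp b * mxOp b⁻¹) = a.addVerts {a.elt * b.elt} := by
  refine FExp.ext' (Subgraph.ext' ?_ (by simp [mxOp, maxElt, deltaG, FExp.addVerts]))
    (by simp [mxOp, maxElt, FExp.addVerts])
  ext v
  simp only [mxOp, maxElt, deltaG, FExp.addVerts, FExp.mul_graph, FExp.inv_elt, union_verts,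
    smul_verts, Set.image_union, Set.image_insert_eq, Set.image_singleton, Finset.coe_singleton,
    Set.mem_union, Set.mem_insert_iff, Set.mem_singleton_iff, mul_inv_cancel]
  rw [_root_.mul_one, _root_.mul_one]
  constructor
  · rintro (hv | (rfl | rfl) | (rfl | rfl))
    exacts [Or.inl hv, Or.inl a.elt_mem, Or.inr rfl, Or.inr rfl, Or.inl a.elt_mem]
  · rintro (hv | rfl)
    exacts [Or.inl hv, Or.inr (Or.inl (Or.inr rfl))]

variable {ρ : FExp φ → FExp φ → Prop} (hρ : Equivalence ρ)
  (hmul_left : ∀ a c d : FExp φ, ρ c d → ρ (a * c) (a * d))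
  (hperf : ∀ a : FExp φ, ρ (mxOp a * mxOp a⁻¹) 1)
include hρ hmul_left hperf

lemma rel_addVerts (a : FExp φ) (V : Finset G) : ρ a (a.addVerts V) := by
  induction V using Finset.induction_on with
  | empty => rw [FExp.addVerts_empty]; exact hρ.refl a
  | @insert g V _ ih =>
    set c := a.addVerts V
    have key := hmul_left c _ _ (hperf (maxElt φ (c.elt⁻¹ * g)))
    rw [FExp.mul_mxOp_mul_mxOp_inv, FExp.mul_one] at key
    rw [FExp.addVerts_insert]
    exact hρ.trans ih (hρ.symm (by simpa [maxElt] using key))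

lemma rel_of_edMap_eq {a b : FExp φ} (hab : edMap a = edMap b) : ρ a b := by
  have hcommon : a.addVerts b.finite.1.toFinset = b.addVerts a.finite.1.toFinset := by
    refine FExp.ext' (Subgraph.ext' ?_ (congrArg (·.graph.edges) hab)) (congrArg PExp.elt hab)
    simp only [FExp.addVerts, Set.Finite.coe_toFinset, Set.union_comm]
  have hb := rel_addVerts hρ hmul_left hperf b a.finite.1.toFinset
  rw [← hcommon] at hb
  exact hρ.trans (rel_addVerts hρ hmul_left hperf a _) (hρ.symm hb)

end EdMap

theorem statement18_general {G : Type u} [Group G] {X : Type v} (φ : X → G) :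
    -- (Γ,g) ↦ (Ed Γ, g) is a surjective canonical morphism of F-inverse monoids
    Function.Surjective (edMap (φ := φ)) ∧
    (edMap (1 : FExp φ) = 1) ∧
    (∀ a b : FExp φ, edMap (a * b) = edMap a * edMap b) ∧
    (∀ a : FExp φ, edMap a⁻¹ = (edMap a)⁻¹) ∧
    (∀ a : FExp φ, edMap (mxOp a) = pMax (edMap a)) ∧
    (∀ x : X, edMap (genElt φ x) = genEltP φ x) ∧
    -- its kernel congruence has perfect quotient (P(G) satisfies m x · m (x⁻¹) = 1) ...
    (∀ a : FExp φ, edMap (mxOp a * mxOp a⁻¹) = edMap 1) ∧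
    -- ... and is contained in every congruence with perfect quotient, i.e. it is the
    -- smallest congruence θ(PF) on F(G) with perfect quotient, so P(G) ≅ F(G)/θ(PF)
    (∀ ρ : FExp φ → FExp φ → Prop, Equivalence ρ →
      (∀ a b c d : FExp φ, ρ a b → ρ c d → ρ (a * c) (b * d)) →
      (∀ a b : FExp φ, ρ a b → ρ a⁻¹ b⁻¹) →
      (∀ a b : FExp φ, ρ a b → ρ (mxOp a) (mxOp b)) →
      (∀ a : FExp φ, ρ (mxOp a * mxOp a⁻¹) 1) →
      ∀ a b : FExp φ, edMap a = edMap b → ρ a b) ∧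
    -- universality of P(G) among perfect X-generated F-inverse monoids over G
    (∀ (F : Type w) [FInverseMonoid F], ∀ f : X → F,
      (∀ a b : F, mx a * mx b = mx (a * b)) →
      (∀ T : Set F, (∀ x : X, f x ∈ T) → (1 : F) ∈ T →
        (∀ a ∈ T, ∀ b ∈ T, a * b ∈ T) → (∀ a ∈ T, a⁻¹ ∈ T) → (∀ a ∈ T, mx a ∈ T) →
        ∀ s : F, s ∈ T) →
      ∀ ν : G →* GQuot F, (∀ x : X, ν (φ x) = σclass (f x)) →
      ∃ h : PExp φ → F,
        h 1 = 1 ∧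
        (∀ a b : PExp φ, h (a * b) = h a * h b) ∧
        (∀ a : PExp φ, h a⁻¹ = (h a)⁻¹) ∧
        (∀ a : PExp φ, h (pMax a) = mx (h a)) ∧
        (∀ x : X, h (genEltP φ x) = f x) ∧
        ∀ a : PExp φ, σclass (h a) = ν a.elt) := by
  refine ⟨edMap_surjective, edMap_one, edMap_mul, edMap_inv, edMap_mxOp, edMap_genElt,
    edMap_mxOp_mul_mxOp_inv, fun ρ hρ hmul _ _ hperf _ _ =>
      rel_of_edMap_eq hρ (fun a c d => hmul a a c d (hρ.refl a)) hperf, ?_⟩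
  intro F _ f hp _ ν hν
  let μ : G →* F := (maxHom hp).comp ν
  have hmax (g : G) : mx (μ g) = μ g := mx_maxHom hp (ν g)
  have hgen (x : X) : μ (φ x) = mx (f x) := by
    simp only [μ, MonoidHom.comp_apply, hν, maxHom_σclass]
  refine ⟨PExp.lift f μ, PExp.lift_one f μ, PExp.lift_mul f μ, PExp.lift_inv f μ,
    PExp.lift_pMax f μ hmax, PExp.lift_genEltP f μ hgen,
    fun a => (Quotient.sound (PExp.sigma_lift f μ a)).trans (σclass_maxHom hp (ν a.elt))⟩

/-- The map `F(G) → P(G)`, `(Γ,g) ↦ (Ed(Γ), g)`, is a surjective canonical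
morphism of `X`-generated F-inverse monoids whose kernel congruence is the smallest
congruence on `F(G)` with perfect quotient; in particular `P(G) ≅ F(G)/θ(PF)`.
Consequently `P(G)` is universal for perfect `X`-generated F-inverse monoids: for every
perfect `X`-generated F-inverse monoid `F` with a canonical morphism `ν : G → F/σ` there is
a canonical morphism `P(G) → F` making the square commute. -/
theorem statement18 {G : Type u} [Group G] {X : Type v} (φ : X → G)
    (hφ : Subgroup.closure (Set.range φ) = ⊤) :
    -- (Γ,g) ↦ (Ed Γ, g) is a surjective canonical morphism of F-inverse monoids
    Function.Surjective (edMap (φ := φ)) ∧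
    (edMap (1 : FExp φ) = 1) ∧
    (∀ a b : FExp φ, edMap (a * b) = edMap a * edMap b) ∧
    (∀ a : FExp φ, edMap a⁻¹ = (edMap a)⁻¹) ∧
    (∀ a : FExp φ, edMap (mxOp a) = pMax (edMap a)) ∧
    (∀ x : X, edMap (genElt φ x) = genEltP φ x) ∧
    -- its kernel congruence has perfect quotient (P(G) satisfies m x · m (x⁻¹) = 1) ...
    (∀ a : FExp φ, edMap (mxOp a * mxOp a⁻¹) = edMap 1) ∧
    -- ... and is contained in every congruence with perfect quotient, i.e. it is the
    -- smallest congruence θ(PF) on F(G) with perfect quotient, so P(G) ≅ F(G)/θ(PF)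
    (∀ ρ : FExp φ → FExp φ → Prop, Equivalence ρ →
      (∀ a b c d : FExp φ, ρ a b → ρ c d → ρ (a * c) (b * d)) →
      (∀ a b : FExp φ, ρ a b → ρ a⁻¹ b⁻¹) →
      (∀ a b : FExp φ, ρ a b → ρ (mxOp a) (mxOp b)) →
      (∀ a : FExp φ, ρ (mxOp a * mxOp a⁻¹) 1) →
      ∀ a b : FExp φ, edMap a = edMap b → ρ a b) ∧
    -- universality of P(G) among perfect X-generated F-inverse monoids over G
    (∀ (F : Type w) [FInverseMonoid F], ∀ f : X → F,
      (∀ a b : F, mx a * mx b = mx (a * b)) →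
      (∀ T : Set F, (∀ x : X, f x ∈ T) → (1 : F) ∈ T →
        (∀ a ∈ T, ∀ b ∈ T, a * b ∈ T) → (∀ a ∈ T, a⁻¹ ∈ T) → (∀ a ∈ T, mx a ∈ T) →
        ∀ s : F, s ∈ T) →
      ∀ ν : G →* GQuot F, (∀ x : X, ν (φ x) = σclass (f x)) →
      ∃ h : PExp φ → F,
        h 1 = 1 ∧
        (∀ a b : PExp φ, h (a * b) = h a * h b) ∧
        (∀ a : PExp φ, h a⁻¹ = (h a)⁻¹) ∧
        (∀ a : PExp φ, h (pMax a) = mx (h a)) ∧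
        (∀ x : X, h (genEltP φ x) = f x) ∧
        ∀ a : PExp φ, σclass (h a) = ν a.elt) :=
  statement18_general φ

end FInvPaper
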